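/- Let A and B be unital algebras and Ψ: B⊗A → A⊗B an algebra factorisation map, i.e., Ψ(b⊗1) = 1⊗b, Ψ(1⊗a) = a⊗1, Ψ∘(id_B⊗μ_A) = (μ_A⊗id_B)∘(id_A⊗Ψ)∘(Ψ⊗id_A), and Ψ∘(μ_B⊗id_A) = (id_A⊗μ_B)∘(Ψ⊗id_B)∘(id_B⊗Ψ). Set W(a⊗a') = s·a'a⊗1 + r·1⊗a'a − s·a'⊗a on A⊗A, Z(b⊗b') = t·b'b⊗1 + p·1⊗b'b − t·b'⊗b on B⊗B, and X = Ψ∘τ_{A,B}: A⊗B → A⊗B. Then [W,X,X] = 0 and [X,X,Z] = 0. -/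
import Mathlib


open TensorProduct LinearMap

set_option maxHeartbeats 1600000 in
set_option synthInstance.maxHeartbeats 400000 in
/-- Let `A`, `B` be unital algebras and `Ψ : B⊗A → A⊗B` an algebra
factorisation map: `Ψ(b⊗1) = 1⊗b`, `Ψ(1⊗a) = a⊗1`,
`Ψ∘(id_B⊗μ_A) = (μ_A⊗id_B)∘(id_A⊗Ψ)∘(Ψ⊗id_A)` and
`Ψ∘(μ_B⊗id_A) = (id_A⊗μ_B)∘(Ψ⊗id_B)∘(id_B⊗Ψ)`. With
`W(a⊗a') = s·a'a⊗1 + r·1⊗a'a − s·a'⊗a`, `Z(b⊗b') = t·b'b⊗1 + p·1⊗b'b − t·b'⊗b` and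
`X = Ψ∘τ`, one has `[W,X,X] = 0` and `[X,X,Z] = 0`. -/
theorem stmt17 (k A B : Type*) [Field k] [Ring A] [Algebra k A] [Ring B] [Algebra k B]
    (r s t p : k)
    (Ψ : B ⊗[k] A →ₗ[k] A ⊗[k] B)
    (hΨ1 : ∀ b : B, Ψ (b ⊗ₜ[k] (1 : A)) = (1 : A) ⊗ₜ[k] b)
    (hΨ2 : ∀ a : A, Ψ ((1 : B) ⊗ₜ[k] a) = a ⊗ₜ[k] (1 : B))
    (hΨμA : ∀ (b : B) (a a' : A),
      Ψ (b ⊗ₜ[k] (a * a')) =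
        (LinearMap.mul' k A).rTensor B
          ((TensorProduct.assoc k A A B).symm
            (Ψ.lTensor A ((TensorProduct.assoc k A B A)
              (Ψ.rTensor A ((b ⊗ₜ[k] a) ⊗ₜ[k] a'))))))
    (hΨμB : ∀ (b b' : B) (a : A),
      Ψ ((b * b') ⊗ₜ[k] a) =
        (LinearMap.mul' k B).lTensor A
          ((TensorProduct.assoc k A B B)
            (Ψ.rTensor B ((TensorProduct.assoc k B A B).symm
              (b ⊗ₜ[k] Ψ (b' ⊗ₜ[k] a))))))
    (W : A ⊗[k] A →ₗ[k] A ⊗[k] A)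
    (hW : ∀ a a' : A, W (a ⊗ₜ[k] a') =
      s • ((a' * a) ⊗ₜ[k] (1 : A)) + r • ((1 : A) ⊗ₜ[k] (a' * a)) - s • (a' ⊗ₜ[k] a))
    (Z : B ⊗[k] B →ₗ[k] B ⊗[k] B)
    (hZ : ∀ b b' : B, Z (b ⊗ₜ[k] b') =
      t • ((b' * b) ⊗ₜ[k] (1 : B)) + p • ((1 : B) ⊗ₜ[k] (b' * b)) - t • (b' ⊗ₜ[k] b))
    (X : A ⊗[k] B →ₗ[k] A ⊗[k] B)
    (hX : X = Ψ ∘ₗ (TensorProduct.comm k A B).toLinearMap)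
    -- auxiliary maps on A ⊗ A ⊗ B
    (W12 X13 : A ⊗[k] (A ⊗[k] B) →ₗ[k] A ⊗[k] (A ⊗[k] B))
    (hW12 : ∀ (a a' : A) (b : B), W12 (a ⊗ₜ[k] (a' ⊗ₜ[k] b)) =
      ((TensorProduct.mk k A B).flip b).lTensor A (W (a ⊗ₜ[k] a')))
    (hX13 : ∀ (a a' : A) (b : B), X13 (a ⊗ₜ[k] (a' ⊗ₜ[k] b)) =
      (TensorProduct.mk k A B a').lTensor A (X (a ⊗ₜ[k] b)))
    -- auxiliary maps on A ⊗ B ⊗ B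
    (X12' X13' : A ⊗[k] (B ⊗[k] B) →ₗ[k] A ⊗[k] (B ⊗[k] B))
    (hX12' : ∀ (a : A) (b b' : B), X12' (a ⊗ₜ[k] (b ⊗ₜ[k] b')) =
      ((TensorProduct.mk k B B).flip b').lTensor A (X (a ⊗ₜ[k] b)))
    (hX13' : ∀ (a : A) (b b' : B), X13' (a ⊗ₜ[k] (b ⊗ₜ[k] b')) =
      (TensorProduct.mk k B B b).lTensor A (X (a ⊗ₜ[k] b'))) :
    W12 ∘ₗ X13 ∘ₗ X.lTensor A = X.lTensor A ∘ₗ X13 ∘ₗ W12 ∧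
    X12' ∘ₗ X13' ∘ₗ Z.lTensor A = Z.lTensor A ∘ₗ X13' ∘ₗ X12' := by

  have hXab : ∀ (a : A) (b : B), X (a ⊗ₜ[k] b) = Ψ (b ⊗ₜ[k] a) := by
    intro a b; simp [hX]
  -- auxiliary: X acting on third factor after inserting c in second
  have aux : ∀ (c : A) (w : A ⊗[k] B),
      X.lTensor A ((TensorProduct.mk k A B c).lTensor A w) =
        (Ψ ∘ₗ (TensorProduct.mk k B A).flip c).lTensor A w := by
    intro c w
    induction w using TensorProduct.induction_on with
    | zero => simp only [tmul_zero, zero_tmul, map_zero, smul_zero, add_zero, sub_zero, zero_sub, zero_add, neg_zero]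
    | add x y hx hy => simp only [map_add, hx, hy]
    | tmul p q => simp [hXab]
  have aux1 : ∀ w : A ⊗[k] B,
      (Ψ ∘ₗ (TensorProduct.mk k B A).flip (1 : A)).lTensor A w =
        (TensorProduct.mk k A B (1 : A)).lTensor A w := by
    intro w
    induction w using TensorProduct.induction_on with
    | zero => simp only [tmul_zero, zero_tmul, map_zero, smul_zero, add_zero, sub_zero, zero_sub, zero_add, neg_zero]
    | add x y hx hy => simp only [map_add, hx, hy]
    | tmul p q => simp [hΨ1]
  -- auxiliary for part 2: X12' on tensors with 1 in middle slot
  have aux2 : ∀ w : A ⊗[k] B,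
      X12' ((TensorProduct.mk k B B (1 : B)).lTensor A w) =
        (TensorProduct.mk k B B (1 : B)).lTensor A w := by
    intro w
    induction w using TensorProduct.induction_on with
    | zero => simp only [tmul_zero, zero_tmul, map_zero, smul_zero, add_zero, sub_zero, zero_sub, zero_add, neg_zero]
    | add x y hx hy => simp only [map_add, hx, hy]
    | tmul c d => simp [hX12', hXab, hΨ2]
  constructor
  · apply LinearMap.ext
    intro x
    simp only [LinearMap.comp_apply]
    induction x using TensorProduct.induction_on with
    | zero => simp only [tmul_zero, zero_tmul, map_zero, smul_zero, add_zero, sub_zero, zero_sub, zero_add, neg_zero]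
    | add x y hx hy => simp only [map_add, hx, hy]
    | tmul a z =>
      induction z using TensorProduct.induction_on with
      | zero => simp only [tmul_zero, zero_tmul, map_zero, smul_zero, add_zero, sub_zero, zero_sub, zero_add, neg_zero]
      | add z w hz hw => simp only [tmul_add, map_add, hz, hw]
      | tmul a' b =>
        have key : ∀ z : A ⊗[k] B,
            W12 (X13 (a ⊗ₜ[k] z)) =
              s • (TensorProduct.mk k A B (1 : A)).lTensor A
                    ((LinearMap.mul' k A).rTensor B
                      ((TensorProduct.assoc k A A B).symm
                        (Ψ.lTensor A ((TensorProduct.assoc k A B A) (z ⊗ₜ[k] a)))))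
              + r • ((1 : A) ⊗ₜ[k]
                    ((LinearMap.mul' k A).rTensor B
                      ((TensorProduct.assoc k A A B).symm
                        (Ψ.lTensor A ((TensorProduct.assoc k A B A) (z ⊗ₜ[k] a))))))
              - s • (Ψ ∘ₗ (TensorProduct.mk k B A).flip a).lTensor A z := by
          intro z
          induction z using TensorProduct.induction_on with
          | zero => simp only [tmul_zero, zero_tmul, map_zero, smul_zero, add_zero, sub_zero, zero_sub, zero_add, neg_zero]
          | add z w hz hw =>
            simp only [tmul_add, add_tmul, map_add, hz, hw, smul_add]
            abel
          | tmul u v =>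
            rw [hX13 a u v, hXab a v]
            simp only [assoc_tmul, lTensor_tmul, LinearMap.comp_apply,
              TensorProduct.mk_apply, LinearMap.flip_apply]
            generalize Ψ (v ⊗ₜ[k] a) = w
            induction w using TensorProduct.induction_on with
            | zero => simp only [tmul_zero, zero_tmul, map_zero, smul_zero, add_zero, sub_zero, zero_sub, zero_add, neg_zero]
            | add x y hx hy =>
              simp only [tmul_add, map_add, hx, hy, smul_add]
              abel
            | tmul p q =>
              rw [lTensor_tmul, TensorProduct.mk_apply, hW12 p u q, hW p u]
              simp [tmul_add, tmul_sub, smul_tmul', mul_comm]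
        rw [lTensor_tmul, hXab a' b, key (Ψ (b ⊗ₜ[k] a'))]
        have hΦ : (LinearMap.mul' k A).rTensor B
              ((TensorProduct.assoc k A A B).symm
                (Ψ.lTensor A ((TensorProduct.assoc k A B A) ((Ψ (b ⊗ₜ[k] a')) ⊗ₜ[k] a)))) =
            Ψ (b ⊗ₜ[k] (a' * a)) := by
          rw [hΨμA b a' a, rTensor_tmul]
        rw [hΦ]
        rw [hW12 a a' b, hW a a']
        simp only [map_add, map_sub, map_smul, lTensor_tmul, TensorProduct.mk_apply,
          LinearMap.flip_apply]
        rw [hX13, hX13, hX13, hXab, hXab, hΨ1, lTensor_tmul, lTensor_tmul,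
          TensorProduct.mk_apply, hXab, aux, aux, aux1]
        rw [hXab a' b]
  · apply LinearMap.ext
    intro x
    simp only [LinearMap.comp_apply]
    induction x using TensorProduct.induction_on with
    | zero => simp only [tmul_zero, zero_tmul, map_zero, smul_zero, add_zero, sub_zero, zero_sub, zero_add, neg_zero]
    | add x y hx hy => simp only [map_add, hx, hy]
    | tmul a z =>
      induction z using TensorProduct.induction_on with
      | zero => simp only [tmul_zero, zero_tmul, map_zero, smul_zero, add_zero, sub_zero, zero_sub, zero_add, neg_zero]
      | add z w hz hw => simp only [tmul_add, map_add, hz, hw]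
      | tmul b b' =>
        have key : ∀ z : A ⊗[k] B,
            Z.lTensor A (X13' (((TensorProduct.mk k B B).flip b').lTensor A z)) =
              t • ((TensorProduct.mk k B B).flip (1 : B)).lTensor A
                    ((LinearMap.mul' k B).lTensor A
                      ((TensorProduct.assoc k A B B)
                        (Ψ.rTensor B ((TensorProduct.assoc k B A B).symm (b' ⊗ₜ[k] z)))))
              + p • (TensorProduct.mk k B B (1 : B)).lTensor A
                    ((LinearMap.mul' k B).lTensor A
                      ((TensorProduct.assoc k A B B)
                        (Ψ.rTensor B ((TensorProduct.assoc k B A B).symm (b' ⊗ₜ[k] z)))))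
              - t • X12' ((TensorProduct.mk k B B b').lTensor A z) := by
          intro z
          induction z using TensorProduct.induction_on with
          | zero => simp only [tmul_zero, zero_tmul, map_zero, smul_zero, add_zero, sub_zero, zero_sub, zero_add, neg_zero]
          | add z w hz hw =>
            simp only [tmul_add, map_add, hz, hw, smul_add]
            abel
          | tmul u v =>
            simp only [lTensor_tmul, LinearMap.flip_apply, TensorProduct.mk_apply,
              assoc_symm_tmul, rTensor_tmul]
            rw [hX13' u v b', hXab u b', hX12' u b' v, hXab u b']
            generalize Ψ (b' ⊗ₜ[k] u) = w
            induction w using TensorProduct.induction_on with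
            | zero => simp only [tmul_zero, zero_tmul, map_zero, smul_zero, add_zero, sub_zero, zero_sub, zero_add, neg_zero]
            | add x y hx hy =>
              simp only [tmul_add, add_tmul, map_add, hx, hy, smul_add]
              abel
            | tmul c d =>
              simp only [lTensor_tmul, TensorProduct.mk_apply, LinearMap.flip_apply,
                assoc_tmul]
              rw [hZ v d]
              simp only [lTensor_tmul, TensorProduct.mk_apply, LinearMap.flip_apply,
                mul'_apply, tmul_add, tmul_sub, tmul_smul, map_add, map_sub, map_smul,
                smul_tmul']
              rw [← smul_tmul', ← smul_tmul', ← smul_tmul', smul_tmul, smul_tmul,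
                smul_tmul]
        have start : X12' (a ⊗ₜ[k] (b ⊗ₜ[k] b')) =
            ((TensorProduct.mk k B B).flip b').lTensor A (Ψ (b ⊗ₜ[k] a)) := by
          rw [hX12', hXab]
        rw [start]
        rw [key (Ψ (b ⊗ₜ[k] a))]
        have hΦ : (LinearMap.mul' k B).lTensor A
              ((TensorProduct.assoc k A B B)
                (Ψ.rTensor B ((TensorProduct.assoc k B A B).symm
                  (b' ⊗ₜ[k] (Ψ (b ⊗ₜ[k] a)))))) = Ψ ((b' * b) ⊗ₜ[k] a) := by
          rw [hΨμB b' b a]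
        rw [hΦ]
        rw [lTensor_tmul, hZ b b']
        simp only [tmul_add, tmul_sub, tmul_smul, map_add, map_sub, map_smul]
        rw [hX13', hX13', hX13', hXab, hXab, hXab, hΨ2, lTensor_tmul,
          TensorProduct.mk_apply]
        rw [hX12' a (b' * b) (1 : B), hXab, aux2]
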